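/- (Two-parameter exactness.) Let H₀, H₁, H₂ ∈ S^n and G(δ) = H₀ + δ₁H₁ + δ₂H₂. Then G(δ) ⪰ 0 for all δ ∈ [-1,1]² if and only if there exist a degree-≤2 SOS polynomial matrix S₀ ∈ Σ[δ]^n and positive semidefinite S₁, S₂ ∈ S^n with G(δ) = S₀(δ) + (1-δ₁²)S₁ + (1-δ₂²)S₂ identically. -/

import Mathlib

open Matrix MvPolynomial

/-- A symmetric polynomial matrix `S` is a sum of squares if `S = T * Tᵀ`
for some polynomial matrix `T`. -/
def IsSOSMatrix {n m : ℕ} (S : Matrix (Fin n) (Fin n) (MvPolynomial (Fin m) ℝ)) : Prop :=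
  ∃ (q : ℕ) (T : Matrix (Fin n) (Fin q) (MvPolynomial (Fin m) ℝ)), S = T * Tᵀ

/-!
Necessity. Put `A = H₀`, `J₊ = H₁ + H₂`, `J₋ = H₁ - H₂`. Positivity of `G` at `δ = 0` and at the
points `±e₁`, `±e₂`, `±(1, 1)`, `±(1, -1)` gives `A ⪰ 0` and `A ± J ⪰ 0` for `J ∈ {H₁, H₂, J₊, J₋}`.
Take a pseudo-inverse `W ⪰ 0` of `A`, i.e. `A W A = A`. From `A ± J ⪰ 0` one gets
`ker A ⊆ ker J`, hence `J W A = A W J = J`, and then the generalized Schur complements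
`K± = A - J± W J±` are positive semidefinite, since
`2 (A - J W J) = (1 - W J)ᴴ (A + J) (1 - W J) + (1 + W J)ᴴ (A - J) (1 + W J)`.
The certificate is
`S₀ = ½ G W Gᵀ + ⅛ (δ₁ + δ₂)² K₊ + ⅛ (δ₁ - δ₂)² K₋` and `Sᵢ = ½ Hᵢ W Hᵢ + ⅛ (K₊ + K₋)`:
the `δ₁ δ₂` terms cancel because `K₊ - K₋ = -2 (H₁ W H₂ + H₂ W H₁)`.

Sufficiency. Evaluating the identity at `|δᵢ| ≤ 1` writes `G(δ)` as a sum of positive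
semidefinite matrices.
-/

namespace Matrix

open scoped ComplexOrder

variable {𝕜 ι : Type*} [RCLike 𝕜]

theorem IsHermitian.of_add_sub {A J : Matrix ι ι 𝕜} (hp : (A + J).IsHermitian)
    (hm : (A - J).IsHermitian) : J.IsHermitian :=
  IsHermitian.ext fun i j => by
    have h₁ := hp.apply i j
    have h₂ := hm.apply i j
    simp only [add_apply, sub_apply, star_add, star_sub] at h₁ h₂
    linear_combination (h₁ - h₂) / 2

variable [Fintype ι]

open scoped MatrixOrder in
theorem PosSemidef.exists_posSemidef_mul_mul_eq_self [DecidableEq ι] {A : Matrix ι ι 𝕜}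
    (hA : A.PosSemidef) : ∃ W : Matrix ι ι 𝕜, W.PosSemidef ∧ A * W * A = A := by
  have hcont (f : ℝ → ℝ) : ContinuousOn f (spectrum ℝ A) := A.finite_real_spectrum.continuousOn f
  -- the Moore–Penrose pseudo-inverse, since `0⁻¹ = 0` in `ℝ`
  refine ⟨cfc (·⁻¹ : ℝ → ℝ) A, ?_, ?_⟩
  · rw [← nonneg_iff_posSemidef]
    exact cfc_nonneg fun x hx => inv_nonneg.mpr (spectrum_nonneg_of_nonneg hA.nonneg hx)
  · have hA' : IsSelfAdjoint A := hA.isHermitian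
    calc A * cfc (·⁻¹ : ℝ → ℝ) A * A
        = cfc (fun x : ℝ => x * x⁻¹ * x) A := by
          rw [cfc_mul _ _ A (hcont _) (hcont _), cfc_mul _ _ A (hcont _) (hcont _), cfc_id' ℝ A]
      _ = A := by simp only [mul_inv_mul_cancel, cfc_id' ℝ A]

theorem PosSemidef.mulVec_eq_zero_of_add_sub {A J : Matrix ι ι 𝕜} (hp : (A + J).PosSemidef)
    (hm : (A - J).PosSemidef) {x : ι → 𝕜} (hx : A *ᵥ x = 0) : J *ᵥ x = 0 := by
  have hJx : star x ⬝ᵥ J *ᵥ x = 0 := by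
    have h₁ := hp.dotProduct_mulVec_nonneg x
    have h₂ := hm.dotProduct_mulVec_nonneg x
    simp only [add_mulVec, sub_mulVec, hx, zero_add, zero_sub, dotProduct_neg] at h₁ h₂
    exact le_antisymm (neg_nonneg.mp h₂) h₁
  have h := (hp.dotProduct_mulVec_zero_iff x).mp (by simp [add_mulVec, hx, hJx])
  simpa [add_mulVec, hx] using h

theorem PosSemidef.mul_mul_eq_of_add_sub {A J W : Matrix ι ι 𝕜} (hp : (A + J).PosSemidef)
    (hm : (A - J).PosSemidef) (hW : W.IsHermitian) (hAWA : A * W * A = A) :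
    J * W * A = J ∧ A * W * J = J := by
  have hJ : J.IsHermitian := .of_add_sub hp.isHermitian hm.isHermitian
  have hA : A.IsHermitian := by simpa using hp.isHermitian.sub hJ
  have hJWA : J * W * A = J := by
    refine ext_iff_mulVec.mpr fun x => ?_
    have hker : A *ᵥ (x - (W * A) *ᵥ x) = 0 := by
      rw [mulVec_sub, mulVec_mulVec, ← Matrix.mul_assoc, hAWA, sub_self]
    have := PosSemidef.mulVec_eq_zero_of_add_sub hp hm hker
    rwa [mulVec_sub, sub_eq_zero, mulVec_mulVec, ← Matrix.mul_assoc, eq_comm] at this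
  refine ⟨hJWA, ?_⟩
  simpa [conjTranspose_mul, hJ.eq, hW.eq, hA.eq, Matrix.mul_assoc] using congrArg (·ᴴ) hJWA

theorem PosSemidef.sub_mul_mul_of_add_sub [DecidableEq ι] {A J W : Matrix ι ι 𝕜}
    (hp : (A + J).PosSemidef) (hm : (A - J).PosSemidef) (hW : W.IsHermitian)
    (hAWA : A * W * A = A) :
    (A - J * W * J).PosSemidef := by
  have hJ : J.IsHermitian := .of_add_sub hp.isHermitian hm.isHermitian
  obtain ⟨hJWA, hAWJ⟩ := hp.mul_mul_eq_of_add_sub hm hW hAWA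
  have hsum : A - J * W * J = (2⁻¹ : ℝ) • ((1 - W * J)ᴴ * (A + J) * (1 - W * J) +
      (1 + W * J)ᴴ * (A - J) * (1 + W * J)) := by
    simp only [conjTranspose_sub, conjTranspose_add, conjTranspose_one, conjTranspose_mul, hJ.eq,
      hW.eq, Matrix.mul_add, Matrix.add_mul, Matrix.mul_sub, Matrix.sub_mul, Matrix.one_mul,
      Matrix.mul_one, Matrix.mul_assoc]
    simp only [← Matrix.mul_assoc J W A, hJWA, ← Matrix.mul_assoc A W J, hAWJ]
    module
  rw [hsum]
  exact ((hp.conjTranspose_mul_mul_same _).add (hm.conjTranspose_mul_mul_same _)).smul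
    (by norm_num)

end Matrix

namespace MvPolynomial

variable {σ R : Type*} [CommSemiring R] {l m o : Type*}

theorem totalDegree_matrix_mul_apply_le [Fintype m] {P : Matrix l m (MvPolynomial σ R)}
    {Q : Matrix m o (MvPolynomial σ R)} {d e : ℕ} (hP : ∀ i j, (P i j).totalDegree ≤ d)
    (hQ : ∀ i j, (Q i j).totalDegree ≤ e) (i : l) (k : o) :
    ((P * Q) i k).totalDegree ≤ d + e :=
  (totalDegree_finsetSum _ _).trans <| Finset.sup_le fun j _ =>
    (totalDegree_mul _ _).trans (add_le_add (hP i j) (hQ j k))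

theorem totalDegree_matrix_add_apply_le {P Q : Matrix l m (MvPolynomial σ R)} {d : ℕ}
    (hP : ∀ i j, (P i j).totalDegree ≤ d) (hQ : ∀ i j, (Q i j).totalDegree ≤ d) (i : l) (j : m) :
    ((P + Q) i j).totalDegree ≤ d :=
  (totalDegree_add _ _).trans (max_le (hP i j) (hQ i j))

theorem totalDegree_matrix_smul_apply_le {p : MvPolynomial σ R} {M : Matrix l m (MvPolynomial σ R)}
    {d e : ℕ} (hp : p.totalDegree ≤ d) (hM : ∀ i j, (M i j).totalDegree ≤ e) (i : l) (j : m) :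
    ((p • M) i j).totalDegree ≤ d + e :=
  (totalDegree_mul _ _).trans (add_le_add hp (hM i j))

theorem totalDegree_matrix_map_C_apply (M : Matrix l m R) (i : l) (j : m) :
    (M.map (C : R → MvPolynomial σ R) i j).totalDegree = 0 :=
  totalDegree_C _

theorem matrix_map_C_map_eval (M : Matrix l m R) (f : σ → R) :
    (M.map (C : R → MvPolynomial σ R)).map (eval f) = M := by
  ext; simp

theorem matrix_smul_map_eval (p : MvPolynomial σ R) (M : Matrix l m (MvPolynomial σ R))
    (f : σ → R) : (p • M).map (eval f) = eval f p • M.map (eval f) := by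
  ext; simp

theorem matrix_ext_of_map_eval {R : Type*} [CommRing R] [IsDomain R] [Infinite R]
    {P Q : Matrix l m (MvPolynomial σ R)} (h : ∀ f : σ → R, P.map (eval f) = Q.map (eval f)) :
    P = Q :=
  Matrix.ext fun i j => MvPolynomial.funext fun f => congrFun (congrFun (h f) i) j

end MvPolynomial

section SOS

variable {n m : ℕ}

theorem isSOSMatrix_mul_transpose {κ : Type*} [Fintype κ]
    (T : Matrix (Fin n) κ (MvPolynomial (Fin m) ℝ)) : IsSOSMatrix (T * Tᵀ) := by
  refine ⟨_, T.submatrix id (Fintype.equivFin κ).symm, ?_⟩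
  rw [transpose_submatrix, submatrix_mul_equiv, submatrix_id_id]

theorem IsSOSMatrix.add {S S' : Matrix (Fin n) (Fin n) (MvPolynomial (Fin m) ℝ)}
    (hS : IsSOSMatrix S) (hS' : IsSOSMatrix S') : IsSOSMatrix (S + S') := by
  obtain ⟨_, T, rfl⟩ := hS
  obtain ⟨_, T', rfl⟩ := hS'
  simpa [transpose_fromCols, fromCols_mul_fromRows] using isSOSMatrix_mul_transpose (fromCols T T')

theorem IsSOSMatrix.mul_mul_transpose {k : ℕ} {S : Matrix (Fin k) (Fin k) (MvPolynomial (Fin m) ℝ)}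
    (hS : IsSOSMatrix S) (P : Matrix (Fin n) (Fin k) (MvPolynomial (Fin m) ℝ)) :
    IsSOSMatrix (P * S * Pᵀ) := by
  obtain ⟨_, T, rfl⟩ := hS
  simpa [transpose_mul, Matrix.mul_assoc] using isSOSMatrix_mul_transpose (P * T)

theorem IsSOSMatrix.sq_smul {S : Matrix (Fin n) (Fin n) (MvPolynomial (Fin m) ℝ)}
    (hS : IsSOSMatrix S) (p : MvPolynomial (Fin m) ℝ) : IsSOSMatrix (p ^ 2 • S) := by
  obtain ⟨_, T, rfl⟩ := hS
  simpa [sq, mul_smul, transpose_smul] using isSOSMatrix_mul_transpose (p • T)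

open scoped MatrixOrder in
theorem Matrix.PosSemidef.isSOSMatrix_map_C {K : Matrix (Fin n) (Fin n) ℝ} (hK : K.PosSemidef) :
    IsSOSMatrix (K.map (C : ℝ → MvPolynomial (Fin m) ℝ)) := by
  obtain ⟨B, rfl⟩ := CStarAlgebra.nonneg_iff_eq_star_mul_self.mp hK.nonneg
  simpa [Matrix.map_mul, star_eq_conjTranspose, conjTranspose_eq_transpose_of_trivial,
    transpose_map] using isSOSMatrix_mul_transpose (Bᵀ.map (C : ℝ → MvPolynomial (Fin m) ℝ))

theorem IsSOSMatrix.posSemidef_map_eval {S : Matrix (Fin n) (Fin n) (MvPolynomial (Fin m) ℝ)}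
    (hS : IsSOSMatrix S) (f : Fin m → ℝ) : (S.map (eval f)).PosSemidef := by
  obtain ⟨_, T, rfl⟩ := hS
  simpa [Matrix.map_mul, conjTranspose_eq_transpose_of_trivial, transpose_map] using
    posSemidef_self_mul_conjTranspose (T.map (eval f))

end SOS
section Certificate

variable {ι : Type*}

noncomputable def affinePencil (A H₁ H₂ : Matrix ι ι ℝ) : Matrix ι ι (MvPolynomial (Fin 2) ℝ) :=
  A.map C + (X 0 : MvPolynomial (Fin 2) ℝ) • H₁.map C + (X 1 : MvPolynomial (Fin 2) ℝ) • H₂.map C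

theorem affinePencil_map_eval (A H₁ H₂ : Matrix ι ι ℝ) (f : Fin 2 → ℝ) :
    (affinePencil A H₁ H₂).map (eval f) = A + f 0 • H₁ + f 1 • H₂ := by
  ext; simp [affinePencil]

theorem totalDegree_affinePencil_apply_le (A H₁ H₂ : Matrix ι ι ℝ) (i j : ι) :
    (affinePencil A H₁ H₂ i j).totalDegree ≤ 1 := by
  have hC (M : Matrix ι ι ℝ) := totalDegree_matrix_map_C_apply (σ := Fin 2) M
  refine totalDegree_matrix_add_apply_le (totalDegree_matrix_add_apply_le ?_ ?_) ?_ i j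
  · exact fun i j => (hC A i j).trans_le zero_le_one
  · exact totalDegree_matrix_smul_apply_le (e := 0) (totalDegree_X 0).le fun i j => (hC H₁ i j).le
  · exact totalDegree_matrix_smul_apply_le (e := 0) (totalDegree_X 1).le fun i j => (hC H₂ i j).le

variable [Fintype ι]

noncomputable def sosCertificate (A H₁ H₂ W : Matrix ι ι ℝ) : Matrix ι ι (MvPolynomial (Fin 2) ℝ) :=
  affinePencil A H₁ H₂ * ((2⁻¹ : ℝ) • W).map C * (affinePencil A H₁ H₂)ᵀ +
    (X 0 + X 1 : MvPolynomial (Fin 2) ℝ) ^ 2 • ((8⁻¹ : ℝ) • (A - (H₁ + H₂) * W * (H₁ + H₂))).map C +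
    (X 0 - X 1 : MvPolynomial (Fin 2) ℝ) ^ 2 • ((8⁻¹ : ℝ) • (A - (H₁ - H₂) * W * (H₁ - H₂))).map C

noncomputable def multiplierCertificate (A H₁ H₂ W H : Matrix ι ι ℝ) : Matrix ι ι ℝ :=
  (2⁻¹ : ℝ) • (H * W * H) +
    (8⁻¹ : ℝ) • (A - (H₁ + H₂) * W * (H₁ + H₂) + (A - (H₁ - H₂) * W * (H₁ - H₂)))

variable {n : ℕ}

theorem totalDegree_sosCertificate_apply_le (A H₁ H₂ W : Matrix ι ι ℝ) (i j : ι) :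
    (sosCertificate A H₁ H₂ W i j).totalDegree ≤ 2 := by
  have hC (M : Matrix ι ι ℝ) := totalDegree_matrix_map_C_apply (σ := Fin 2) M
  have hG := totalDegree_affinePencil_apply_le A H₁ H₂
  have hsq {p : MvPolynomial (Fin 2) ℝ} (hp : p.totalDegree ≤ 1) : (p ^ 2).totalDegree ≤ 2 :=
    (totalDegree_pow p 2).trans (by omega)
  have hX (i : Fin 2) : (X i : MvPolynomial (Fin 2) ℝ).totalDegree ≤ 1 := (totalDegree_X i).le
  refine totalDegree_matrix_add_apply_le (totalDegree_matrix_add_apply_le ?_ ?_) ?_ i j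
  · exact totalDegree_matrix_mul_apply_le
      (totalDegree_matrix_mul_apply_le hG fun i j => (hC _ i j).le) fun i j => hG j i
  · refine totalDegree_matrix_smul_apply_le (e := 0) (hsq ?_) fun i j => (hC _ i j).le
    exact (totalDegree_add _ _).trans (max_le (hX 0) (hX 1))
  · refine totalDegree_matrix_smul_apply_le (e := 0) (hsq ?_) fun i j => (hC _ i j).le
    exact (totalDegree_sub _ _).trans (max_le (hX 0) (hX 1))

theorem isSOSMatrix_sosCertificate {A H₁ H₂ W : Matrix (Fin n) (Fin n) ℝ} (hW : W.PosSemidef)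
    (hp : (A - (H₁ + H₂) * W * (H₁ + H₂)).PosSemidef)
    (hm : (A - (H₁ - H₂) * W * (H₁ - H₂)).PosSemidef) :
    IsSOSMatrix (sosCertificate A H₁ H₂ W) :=
  (((hW.smul (by norm_num : (0 : ℝ) ≤ 2⁻¹)).isSOSMatrix_map_C.mul_mul_transpose _).add
    ((hp.smul (by norm_num : (0 : ℝ) ≤ 8⁻¹)).isSOSMatrix_map_C.sq_smul _)).add
    ((hm.smul (by norm_num : (0 : ℝ) ≤ 8⁻¹)).isSOSMatrix_map_C.sq_smul _)

theorem posSemidef_multiplierCertificate {A H₁ H₂ W H : Matrix ι ι ℝ} (hH : H.IsHermitian)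
    (hW : W.PosSemidef) (hp : (A - (H₁ + H₂) * W * (H₁ + H₂)).PosSemidef)
    (hm : (A - (H₁ - H₂) * W * (H₁ - H₂)).PosSemidef) :
    (multiplierCertificate A H₁ H₂ W H).PosSemidef := by
  refine .add (.smul ?_ (by norm_num)) (.smul (hp.add hm) (by norm_num))
  simpa only [hH.eq] using hW.conjTranspose_mul_mul_same H

theorem affinePencil_eq_sosCertificate_add {A H₁ H₂ W : Matrix ι ι ℝ} (hA : A.IsHermitian)
    (hH₁ : H₁.IsHermitian) (hH₂ : H₂.IsHermitian) (hAWA : A * W * A = A)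
    (hH₁WA : H₁ * W * A = H₁) (hAWH₁ : A * W * H₁ = H₁)
    (hH₂WA : H₂ * W * A = H₂) (hAWH₂ : A * W * H₂ = H₂) :
    affinePencil A H₁ H₂ = sosCertificate A H₁ H₂ W +
      (1 - X 0 ^ 2 : MvPolynomial (Fin 2) ℝ) • (multiplierCertificate A H₁ H₂ W H₁).map C +
      (1 - X 1 ^ 2 : MvPolynomial (Fin 2) ℝ) • (multiplierCertificate A H₁ H₂ W H₂).map C := by
  refine matrix_ext_of_map_eval fun f => ?_
  have hT (M : Matrix ι ι ℝ) (hM : M.IsHermitian) : Mᵀ = M := by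
    rw [← conjTranspose_eq_transpose_of_trivial, hM.eq]
  simp only [sosCertificate, Matrix.map_add _ (map_add (eval f)), Matrix.map_mul,
    matrix_smul_map_eval, matrix_map_C_map_eval, transpose_map, affinePencil_map_eval,
    transpose_add, transpose_smul, hT A hA, hT H₁ hH₁, hT H₂ hH₂, map_add, map_sub, map_pow,
    map_one, eval_X]
  simp only [multiplierCertificate, Matrix.add_mul, Matrix.mul_add, Matrix.sub_mul,
    Matrix.mul_sub, Matrix.smul_mul, Matrix.mul_smul, Matrix.mul_assoc]
  simp only [← Matrix.mul_assoc A W, ← Matrix.mul_assoc H₁ W A, ← Matrix.mul_assoc H₂ W A, hAWA,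
    hAWH₁, hAWH₂, hH₁WA, hH₂WA]
  module

end Certificate

theorem posSemidef_of_affinePencil_eq {n : ℕ} {H₀ H₁ H₂ S₁ S₂ : Matrix (Fin n) (Fin n) ℝ}
    {S₀ : Matrix (Fin n) (Fin n) (MvPolynomial (Fin 2) ℝ)} (hS₀ : IsSOSMatrix S₀)
    (hS₁ : S₁.PosSemidef) (hS₂ : S₂.PosSemidef)
    (hG : affinePencil H₀ H₁ H₂ = S₀ + (1 - X 0 ^ 2 : MvPolynomial (Fin 2) ℝ) • S₁.map C +
      (1 - X 1 ^ 2 : MvPolynomial (Fin 2) ℝ) • S₂.map C)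
    {δ₁ δ₂ : ℝ} (hδ₁ : |δ₁| ≤ 1) (hδ₂ : |δ₂| ≤ 1) : (H₀ + δ₁ • H₁ + δ₂ • H₂).PosSemidef := by
  have h := congrArg (Matrix.map · (eval ![δ₁, δ₂])) hG
  simp only [affinePencil_map_eval, Matrix.map_add _ (map_add _), matrix_smul_map_eval,
    matrix_map_C_map_eval, map_sub, map_one, map_pow, eval_X, Matrix.cons_val_zero,
    Matrix.cons_val_one] at h
  rw [h]
  have hδ {δ : ℝ} (hδ : |δ| ≤ 1) : 0 ≤ 1 - δ ^ 2 :=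
    sub_nonneg.mpr ((sq_le_one_iff_abs_le_one δ).mpr hδ)
  exact ((hS₀.posSemidef_map_eval _).add (hS₁.smul (hδ hδ₁))).add (hS₂.smul (hδ hδ₂))

theorem two_parameter_exactness_general {n : ℕ}
    (H₀ H₁ H₂ : Matrix (Fin n) (Fin n) ℝ) :
    (∀ δ₁ δ₂ : ℝ, |δ₁| ≤ 1 → |δ₂| ≤ 1 → (H₀ + δ₁ • H₁ + δ₂ • H₂).PosSemidef) ↔
      ∃ (S₀ : Matrix (Fin n) (Fin n) (MvPolynomial (Fin 2) ℝ))
        (S₁ S₂ : Matrix (Fin n) (Fin n) ℝ),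
        IsSOSMatrix S₀ ∧ (∀ a b, (S₀ a b).totalDegree ≤ 2) ∧
        S₁.PosSemidef ∧ S₂.PosSemidef ∧
        H₀.map MvPolynomial.C +
            (MvPolynomial.X 0 : MvPolynomial (Fin 2) ℝ) • H₁.map MvPolynomial.C +
            (MvPolynomial.X 1 : MvPolynomial (Fin 2) ℝ) • H₂.map MvPolynomial.C =
          S₀ + ((1 : MvPolynomial (Fin 2) ℝ) - MvPolynomial.X 0 ^ 2) • S₁.map MvPolynomial.C +
            ((1 : MvPolynomial (Fin 2) ℝ) - MvPolynomial.X 1 ^ 2) • S₂.map MvPolynomial.C := by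
  refine ⟨fun h => ?_, fun ⟨S₀, S₁, S₂, hS₀, _, hS₁, hS₂, hG⟩ δ₁ δ₂ hδ₁ hδ₂ =>
    posSemidef_of_affinePencil_eq hS₀ hS₁ hS₂ hG hδ₁ hδ₂⟩
  have hv (s t : ℝ) (hs : |s| ≤ 1) (ht : |t| ≤ 1) :
      (H₀ + (s • H₁ + t • H₂)).PosSemidef ∧ (H₀ - (s • H₁ + t • H₂)).PosSemidef :=
    ⟨by simpa only [add_assoc] using h s t hs ht, by
      simpa only [sub_eq_add_neg, neg_add, neg_smul, add_assoc] using
        h (-s) (-t) (by rwa [abs_neg]) (by rwa [abs_neg])⟩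
  have hH₀ : H₀.PosSemidef := by simpa using h 0 0 (by simp) (by simp)
  obtain ⟨W, hW, hAWA⟩ := hH₀.exists_posSemidef_mul_mul_eq_self
  obtain ⟨hp₁, hm₁⟩ : (H₀ + H₁).PosSemidef ∧ (H₀ - H₁).PosSemidef := by
    simpa using hv 1 0 (by simp) (by simp)
  obtain ⟨hp₂, hm₂⟩ : (H₀ + H₂).PosSemidef ∧ (H₀ - H₂).PosSemidef := by
    simpa using hv 0 1 (by simp) (by simp)
  obtain ⟨hp, hm⟩ : (H₀ + (H₁ + H₂)).PosSemidef ∧ (H₀ - (H₁ + H₂)).PosSemidef := by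
    simpa using hv 1 1 (by simp) (by simp)
  obtain ⟨hp', hm'⟩ : (H₀ + (H₁ - H₂)).PosSemidef ∧ (H₀ - (H₁ - H₂)).PosSemidef := by
    simpa [sub_eq_add_neg] using hv 1 (-1) (by simp) (by simp)
  have hSp := hp.sub_mul_mul_of_add_sub hm hW.isHermitian hAWA
  have hSm := hp'.sub_mul_mul_of_add_sub hm' hW.isHermitian hAWA
  obtain ⟨hH₁WA, hAWH₁⟩ := hp₁.mul_mul_eq_of_add_sub hm₁ hW.isHermitian hAWA
  obtain ⟨hH₂WA, hAWH₂⟩ := hp₂.mul_mul_eq_of_add_sub hm₂ hW.isHermitian hAWA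
  have hH₁ := IsHermitian.of_add_sub hp₁.isHermitian hm₁.isHermitian
  have hH₂ := IsHermitian.of_add_sub hp₂.isHermitian hm₂.isHermitian
  exact ⟨_, _, _, isSOSMatrix_sosCertificate hW hSp hSm,
    totalDegree_sosCertificate_apply_le H₀ H₁ H₂ W, posSemidef_multiplierCertificate hH₁ hW hSp hSm,
    posSemidef_multiplierCertificate hH₂ hW hSp hSm,
    affinePencil_eq_sosCertificate_add hH₀.isHermitian hH₁ hH₂ hAWA hH₁WA hAWH₁ hH₂WA hAWH₂⟩

theorem two_parameter_exactness {n : ℕ}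
    (H₀ H₁ H₂ : Matrix (Fin n) (Fin n) ℝ)
    (h0 : H₀.IsSymm) (h1 : H₁.IsSymm) (h2 : H₂.IsSymm) :
    (∀ δ₁ δ₂ : ℝ, |δ₁| ≤ 1 → |δ₂| ≤ 1 → (H₀ + δ₁ • H₁ + δ₂ • H₂).PosSemidef) ↔
      ∃ (S₀ : Matrix (Fin n) (Fin n) (MvPolynomial (Fin 2) ℝ))
        (S₁ S₂ : Matrix (Fin n) (Fin n) ℝ),
        IsSOSMatrix S₀ ∧ (∀ a b, (S₀ a b).totalDegree ≤ 2) ∧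
        S₁.PosSemidef ∧ S₂.PosSemidef ∧
        H₀.map MvPolynomial.C +
            (MvPolynomial.X 0 : MvPolynomial (Fin 2) ℝ) • H₁.map MvPolynomial.C +
            (MvPolynomial.X 1 : MvPolynomial (Fin 2) ℝ) • H₂.map MvPolynomial.C =
          S₀ + ((1 : MvPolynomial (Fin 2) ℝ) - MvPolynomial.X 0 ^ 2) • S₁.map MvPolynomial.C +
            ((1 : MvPolynomial (Fin 2) ℝ) - MvPolynomial.X 1 ^ 2) • S₂.map MvPolynomial.C :=
  two_parameter_exactness_general H₀ H₁ H₂
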